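/- arXiv:1904.00789 — 4 statements merged into one kernel-verified Lean document; each statement's English description precedes it below -/
import Mathlib

section
/- Let k be a field and l a prime number (possibly equal to the characteristic of k). In the rational function field k(t), there do not exist an element v ∈ k(t) that is algebraic over k and an element f ∈ k(t) with t = v · f^l. (Equivalently, the class of t in k(t)^*/(k(t)^*)^l does not come from any algebraic subextension of k(t)/k.) -/
lemma intDegree_pow_aux {k : Type*} [Field k] (f : RatFunc k) (hf : f ≠ 0) (n : ℕ) :
    (f ^ n).intDegree = n * f.intDegree := by
  induction n with
  | zero => simp [RatFunc.intDegree_one]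
  | succ m ih =>
      rw [pow_succ, RatFunc.intDegree_mul (pow_ne_zero _ hf) hf, ih]
      push_cast
      ring

/-- Lemma 3.3: Let `k` be a field and `l` a prime number (possibly equal to
`char k`). In the rational function field `k(t)`, there do not exist an element `v ∈ k(t)`
algebraic over `k` and an element `f ∈ k(t)` with `t = v * f ^ l`. -/
theorem stmt0 (k : Type*) [Field k] (l : ℕ) (hl : l.Prime) :
    ¬ ∃ (v f : RatFunc k), IsAlgebraic k v ∧ (RatFunc.X : RatFunc k) = v * f ^ l := by
  rintro ⟨v, f, halg, hX⟩
  have hXne : (RatFunc.X : RatFunc k) ≠ 0 := RatFunc.X_ne_zero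
  have hv : v ≠ 0 := by rintro rfl; rw [zero_mul] at hX; exact hXne hX
  have hf : f ≠ 0 := by rintro rfl; rw [zero_pow hl.ne_zero, mul_zero] at hX; exact hXne hX
  -- v is integral over k[X]
  have hint : IsIntegral (Polynomial k) v := (halg.isIntegral).tower_top
  obtain ⟨p, hp⟩ := IsIntegrallyClosed.isIntegral_iff.mp hint
  -- p is algebraic over k
  have hpalg : IsAlgebraic k p := by
    have h := halg
    rw [← hp] at h
    exact (isAlgebraic_algHom_iff (IsScalarTower.toAlgHom k (Polynomial k) (RatFunc k))
      (IsFractionRing.injective _ _)).mp h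
  have hpdeg : p.natDegree = 0 := by
    by_contra hdeg
    exact (p.transcendental hdeg
      (mem_nonZeroDivisors_of_ne_zero (Polynomial.leadingCoeff_ne_zero.mpr (by
        rintro rfl; simp at hdeg)))) hpalg
  have hvdeg : v.intDegree = 0 := by
    rw [← hp, RatFunc.intDegree_polynomial, hpdeg]; rfl
  have h1 : (RatFunc.X : RatFunc k).intDegree = 1 := RatFunc.intDegree_X
  rw [hX, RatFunc.intDegree_mul hv (pow_ne_zero _ hf), hvdeg, zero_add,
    intDegree_pow_aux f hf] at h1
  have hunit : IsUnit (l : ℤ) := IsUnit.of_mul_eq_one _ h1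
  rw [Int.isUnit_iff] at hunit
  have h2 := hl.two_le
  omega
end

section
/- Let k be a field of characteristic p > 0. In the rational function field k(t), there do not exist an element λ ∈ k(t) that is algebraic over k and an element q ∈ k(t) with t = λ + q^p − q. -/
/-!
An element of `k(t)` algebraic over `k` is a constant `c`, so the identity would give
`q ^ p - q = t - c`, of degree `1` at infinity. But if `q` has degree `d ≤ 0` then so does
`q ^ p - q`, while if `d ≥ 1` the term `q ^ p` dominates and `q ^ p - q` has degree `p * d ≥ 2`.
-/

namespace RatFunc

variable {K : Type*} [Field K]

theorem intDegree_pow {q : RatFunc K} (hq : q ≠ 0) (n : ℕ) :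
    (q ^ n).intDegree = n * q.intDegree := by
  induction n with
  | zero => simp
  | succ n ih =>
    rw [pow_succ, intDegree_mul (pow_ne_zero n hq) hq, ih]
    push_cast
    ring

theorem intDegree_add_eq_left_of_lt {x y : RatFunc K} (hx : x ≠ 0)
    (h : y.intDegree < x.intDegree) : (x + y).intDegree = x.intDegree := by
  rcases eq_or_ne y 0 with rfl | hy
  · rw [add_zero]
  have hxy : x + y ≠ 0 := by
    intro h0
    rw [eq_neg_of_add_eq_zero_left h0, intDegree_neg] at h
    exact h.false
  have hle : (x + y).intDegree ≤ x.intDegree :=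
    (intDegree_add_le hy hxy).trans (max_le le_rfl h.le)
  have hge : x.intDegree ≤ max (x + y).intDegree y.intDegree := by
    simpa only [add_neg_cancel_right, intDegree_neg] using
      intDegree_add_le (x := x + y) (neg_ne_zero.mpr hy) (by rwa [add_neg_cancel_right])
  exact le_antisymm hle ((le_max_iff.mp hge).resolve_right h.not_ge)

theorem exists_eq_C_of_isAlgebraic {f : RatFunc K} (hf : IsAlgebraic K f) : ∃ c, f = C c := by
  by_contra h
  exact transcendental_of_ne_C f h hf

theorem intDegree_pow_sub_self_ne_one (q : RatFunc K) {n : ℕ} (hn : 2 ≤ n) :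
    (q ^ n - q).intDegree ≠ 1 := by
  rcases eq_or_ne q 0 with rfl | hq
  · simp [zero_pow (by omega : n ≠ 0)]
  have hqn : (q ^ n).intDegree = n * q.intDegree := intDegree_pow hq n
  have hn' : (2 : ℤ) ≤ n := by exact_mod_cast hn
  rcases le_or_gt q.intDegree 0 with hd | hd
  · intro h1
    have hne : q ^ n + -q ≠ 0 := by
      rw [← sub_eq_add_neg]
      rintro h0
      rw [h0, intDegree_zero] at h1
      exact zero_ne_one h1
    have hle := intDegree_add_le (neg_ne_zero.mpr hq) hne
    rw [← sub_eq_add_neg, h1, intDegree_neg, hqn] at hle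
    have hnd : (n : ℤ) * q.intDegree ≤ 0 := mul_nonpos_of_nonneg_of_nonpos (by omega) hd
    omega
  · rw [sub_eq_add_neg, intDegree_add_eq_left_of_lt (pow_ne_zero n hq), hqn]
    · nlinarith
    · rw [intDegree_neg, hqn]
      nlinarith

end RatFunc

theorem stmt1_general (k : Type*) [Field k] (p : ℕ) (hp : p.Prime) :
    ¬ ∃ (lam q : RatFunc k), IsAlgebraic k lam ∧
      (RatFunc.X : RatFunc k) = lam + (q ^ p - q) := by
  rintro ⟨lam, q, hlam, hX⟩
  obtain ⟨c, rfl⟩ := RatFunc.exists_eq_C_of_isAlgebraic hlam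
  have hq : q ^ p - q = RatFunc.X + -RatFunc.C c := by linear_combination -hX
  apply RatFunc.intDegree_pow_sub_self_ne_one q hp.two_le
  rw [hq, RatFunc.intDegree_add_eq_left_of_lt RatFunc.X_ne_zero] <;> simp

/-- Lemma 3.5: Let `k` be a field of characteristic `p > 0`. In the rational
function field `k(t)`, there do not exist an element `λ ∈ k(t)` algebraic over `k` and an
element `q ∈ k(t)` with `t = λ + q ^ p - q`. -/
theorem stmt1 (k : Type*) [Field k] (p : ℕ) (hp : p.Prime) [CharP k p] :
    ¬ ∃ (lam q : RatFunc k), IsAlgebraic k lam ∧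
      (RatFunc.X : RatFunc k) = lam + (q ^ p - q) :=
  stmt1_general k p hp
end

section
/- Let l be a prime number and let G be an infinite profinite abelian group (compact, Hausdorff, totally disconnected topological abelian group) in which every element has order a power of l (in particular G is torsion). Then the l-torsion subgroup G[l] = {g ∈ G : g^l = 1} is infinite. -/
/-- from the proof of Lemma 3.8: Let `l` be a prime and `G` an infinite
profinite abelian group in which every element has order a power of `l`. Then the `l`-torsion
subgroup `G[l] = {g : G | g ^ l = 1}` is infinite. -/
theorem stmt4 (l : ℕ) (hl : l.Prime) (G : Type*) [CommGroup G] [TopologicalSpace G]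
    [IsTopologicalGroup G] [CompactSpace G] [T2Space G] [TotallyDisconnectedSpace G]
    [Infinite G] (htors : ∀ g : G, ∃ n : ℕ, g ^ l ^ n = 1) :
    {g : G | g ^ l = 1}.Infinite := by
  by_contra hfin
  rw [Set.not_infinite] at hfin
  -- each torsion level is finite
  have hS : ∀ n : ℕ, ({g : G | g ^ l ^ n = 1} : Set G).Finite := by
    intro n
    induction n with
    | zero =>
      have : ({g : G | g ^ l ^ 0 = 1} : Set G) = {1} := by
        ext g; simp
      rw [this]; exact Set.finite_singleton 1
    | succ n ih =>
      have key : ({g : G | g ^ l ^ (n + 1) = 1} : Set G)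
          = (fun g : G => g ^ l ^ n) ⁻¹' {g : G | g ^ l = 1} := by
        ext g
        simp only [Set.mem_setOf_eq, Set.mem_preimage, ← pow_mul]
        rw [pow_succ]
      rw [key]
      refine hfin.preimage' ?_
      intro b _
      rcases Set.eq_empty_or_nonempty ((fun g : G => g ^ l ^ n) ⁻¹' {b}) with h | ⟨a, ha⟩
      · rw [h]; exact Set.finite_empty
      · have ha' : a ^ l ^ n = b := ha
        have hsub : ((fun g : G => g ^ l ^ n) ⁻¹' {b})
            ⊆ (fun x : G => x * a) '' {g : G | g ^ l ^ n = 1} := by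
          intro x hx
          refine ⟨x * a⁻¹, ?_, by group⟩
          have hx' : x ^ l ^ n = b := hx
          simp only [Set.mem_setOf_eq, mul_pow, inv_pow, hx', ha']
          group
        exact (ih.image _).subset hsub
  have hcl : ∀ n : ℕ, IsClosed ({g : G | g ^ l ^ n = 1} : Set G) :=
    fun n => isClosed_eq (continuous_pow _) continuous_const
  have hcover : (⋃ n : ℕ, ({g : G | g ^ l ^ n = 1} : Set G)) = Set.univ := by
    ext g
    simpa using htors g
  obtain ⟨n, x, hx⟩ := nonempty_interior_of_iUnion_of_closed hcl hcover
  -- the interior is a finite, open, nonempty set: get an open singleton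
  have hIfin : (interior {g : G | g ^ l ^ n = 1}).Finite :=
    (hS n).subset interior_subset
  have hopen : IsOpen ({x} : Set G) := by
    have h1 : IsClosed (interior {g : G | g ^ l ^ n = 1} \ {x}) :=
      (hIfin.subset Set.diff_subset).isClosed
    have : ({x} : Set G)
        = interior {g : G | g ^ l ^ n = 1} \ (interior {g : G | g ^ l ^ n = 1} \ {x}) := by
      ext y
      simp only [Set.mem_singleton_iff, Set.mem_diff, not_and, not_not]
      constructor
      · rintro rfl; exact ⟨hx, fun _ => rfl⟩
      · rintro ⟨hy, h⟩; exact h hy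
    rw [this]
    exact isOpen_interior.sdiff h1
  -- translate to get {1} open, hence discrete topology
  have h1open : IsOpen ({1} : Set G) := by
    have : ({1} : Set G) = (fun y : G => y * x) ⁻¹' {x} := by
      ext y; simp
    rw [this]
    exact hopen.preimage (by continuity)
  have : DiscreteTopology G := discreteTopology_of_isOpen_singleton_one h1open
  have : Finite G := finite_of_compact_of_discrete
  exact not_finite G
end

section
/- Let n ≥ 2 be an integer, let ι be a finite type (a finite index set), and let e : ι → ι be an involution (e ∘ e = id). Consider the free abelian group P = ι →₀ ℤ (finitely supported functions from ι to ℤ), on which the nontrivial element of ℤ/2 acts by permuting the basis via e (i.e. by x ↦ x ∘ mapping of indices through e). Suppose φ : P → ℤ/2^n is a surjective additive group homomorphism which is equivariant for the ℤ/2-action on P via e and the action on ℤ/2^n by negation, i.e. φ(e·x) = −φ(x) for all x ∈ P, where e·x denotes the image of x under the permutation of coordinates induced by e. Then the cardinality of ι is at least 2. -/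
/-!
If `ι` has at most one element, the permutation `e` is the identity, so equivariance forces
`φ x = -φ x` for every `x`. A surjection onto `ℤ/m` with this property makes `2 = 0` in `ℤ/m`,
i.e. `m ∣ 2`, which fails for `m = 2^n` with `n ≥ 2`.
-/

theorem Finsupp.mapDomain_of_subsingleton {α M : Type*} [AddCommMonoid M] [Subsingleton α]
    (f : α → α) (v : α →₀ M) : Finsupp.mapDomain f v = v := by
  rw [show f = id from funext fun _ => Subsingleton.elim _ _, Finsupp.mapDomain_id]

theorem ZMod.dvd_two_of_surjective_of_map_eq_neg {A : Type*} [AddGroup A] {m : ℕ}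
    (φ : A →+ ZMod m) (hsurj : Function.Surjective φ) (hneg : ∀ x, φ x = -φ x) : m ∣ 2 := by
  obtain ⟨x, hx⟩ := hsurj 1
  have htwo : ((2 : ℕ) : ZMod m) = 0 := by
    have h := hneg x
    rw [hx] at h
    push_cast
    linear_combination h
  exact (ZMod.natCast_eq_zero_iff 2 m).mp htwo

theorem stmt10_general (n : ℕ) (hn : 2 ≤ n) (ι : Type*) [Fintype ι] (e : ι → ι)
    (φ : (ι →₀ ℤ) →+ ZMod (2 ^ n)) (hsurj : Function.Surjective φ)
    (hequiv : ∀ x : ι →₀ ℤ, φ (Finsupp.mapDomain e x) = - φ x) :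
    2 ≤ Fintype.card ι := by
  by_contra! hcard
  have : Subsingleton ι := Fintype.card_le_one_iff_subsingleton.mp (by omega)
  have hdvd : 2 ^ n ∣ 2 ^ 1 :=
    ZMod.dvd_two_of_surjective_of_map_eq_neg φ hsurj fun x => by
      simpa only [Finsupp.mapDomain_of_subsingleton] using hequiv x
  have := (Nat.pow_dvd_pow_iff_le_right (by norm_num)).mp hdvd
  omega

/-- key claim of Example 5.11, due to F. Scavia: Let `n ≥ 2`, `ι` a finite
index set and `e : ι → ι` an involution. If `φ : (ι →₀ ℤ) → ℤ/2^n` is a surjective additive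
homomorphism from the permutation module `P = ι →₀ ℤ` (with `ℤ/2` acting via `e`) which is
equivariant for the negation action on `ℤ/2^n` (i.e. `φ(e·x) = -φ(x)`), then `card ι ≥ 2`. -/
theorem stmt10 (n : ℕ) (hn : 2 ≤ n) (ι : Type*) [Fintype ι] (e : ι → ι)
    (he : Function.Involutive e)
    (φ : (ι →₀ ℤ) →+ ZMod (2 ^ n)) (hsurj : Function.Surjective φ)
    (hequiv : ∀ x : ι →₀ ℤ, φ (Finsupp.mapDomain e x) = - φ x) :
    2 ≤ Fintype.card ι :=
  stmt10_general n hn ι e φ hsurj hequiv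
end
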